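/- Let r ≥ 1, let p₁,…,p_r and p'₁,…,p'_r be sequences in [0,1] with p_r = p'_r = 1, and let ε ≥ 0 be such that the two sequences are ε-ratio-close. Then for every i ∈ {1,…,r}: | ∏_{j≤i}(1−p'_j) − ∏_{j≤i}(1−p_j) | ≤ 3ε·( ∏_{j≤i}(1−min(p_j,p'_j)) )·( Σ_{j≤i} min(p_j,p'_j) ). -/

import Mathlib

/-!
Telescoping one factor at a time, `|∏ x - ∏ y|` is at most `∑_j |x_j - y_j| ∏_{k ≠ j} c_k` whenever
`0 ≤ x_k, y_k ≤ c_k`. With `x = 1 - p'`, `y = 1 - p` and `c = 1 - min p p'`, ratio-closeness bounds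
`|p_j - p'_j|` both by `ε m_j` and by `ε (1 - m_j)`, where `m_j = min p_j p'_j`, hence by
`2 ε m_j (1 - m_j) = 2 ε m_j c_j`; summing gives the claim.
-/

open Finset

def RatioClose (ε a b : ℝ) : Prop :=
  a ≤ (1 + ε) * b ∧ b ≤ (1 + ε) * a ∧ 1 - a ≤ (1 + ε) * (1 - b) ∧ 1 - b ≤ (1 + ε) * (1 - a)

lemma abs_sub_le_mul_min_of_le_one_add_mul {ε a b : ℝ} (hε : 0 ≤ ε) (ha : 0 ≤ a) (hb : 0 ≤ b)
    (hab : a ≤ (1 + ε) * b) (hba : b ≤ (1 + ε) * a) : |a - b| ≤ ε * min a b := by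
  rcases le_total a b with h | h
  · have := mul_nonneg hε ha
    rw [min_eq_left h, abs_le]
    constructor <;> linarith
  · have := mul_nonneg hε hb
    rw [min_eq_right h, abs_le]
    constructor <;> linarith

lemma min_le_two_mul_mul_one_sub {m : ℝ} (hm₀ : 0 ≤ m) (hm₁ : m ≤ 1) :
    min m (1 - m) ≤ 2 * m * (1 - m) := by
  rcases le_total m (1 / 2) with h | h
  · exact (min_le_left _ _).trans (by nlinarith)
  · exact (min_le_right _ _).trans (by nlinarith)

lemma RatioClose.abs_sub_le {ε a b : ℝ} (hε : 0 ≤ ε) (ha : a ∈ Set.Icc (0 : ℝ) 1)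
    (hb : b ∈ Set.Icc (0 : ℝ) 1) (h : RatioClose ε a b) :
    |a - b| ≤ 2 * ε * min a b * (1 - min a b) := by
  obtain ⟨ha₀, ha₁⟩ := ha
  obtain ⟨hb₀, hb₁⟩ := hb
  obtain ⟨hab, hba, hab', hba'⟩ := h
  have hlow : |a - b| ≤ ε * min a b :=
    abs_sub_le_mul_min_of_le_one_add_mul hε ha₀ hb₀ hab hba
  have hhigh : |a - b| ≤ ε * (1 - min a b) := by
    have := abs_sub_le_mul_min_of_le_one_add_mul hε (sub_nonneg.2 ha₁) (sub_nonneg.2 hb₁) hab' hba'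
    rw [sub_sub_sub_cancel_left, abs_sub_comm] at this
    refine this.trans (mul_le_mul_of_nonneg_left ?_ hε)
    rw [min_sub_sub_left]
    exact sub_le_sub_left min_le_max 1
  calc |a - b| ≤ ε * min (min a b) (1 - min a b) := by
        rw [mul_min_of_nonneg _ _ hε]; exact le_min hlow hhigh
    _ ≤ ε * (2 * min a b * (1 - min a b)) :=
        mul_le_mul_of_nonneg_left
          (min_le_two_mul_mul_one_sub (le_min ha₀ hb₀) ((min_le_left _ _).trans ha₁)) hε
    _ = 2 * ε * min a b * (1 - min a b) := by ring

lemma abs_prod_sub_prod_le {ι : Type*} [DecidableEq ι] (s : Finset ι) {x y c e : ι → ℝ}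
    (hx : ∀ j ∈ s, x j ∈ Set.Icc 0 (c j)) (hy : ∀ j ∈ s, y j ∈ Set.Icc 0 (c j))
    (hxy : ∀ j ∈ s, |x j - y j| ≤ c j * e j) :
    |∏ j ∈ s, x j - ∏ j ∈ s, y j| ≤ (∏ j ∈ s, c j) * ∑ j ∈ s, e j := by
  induction s using Finset.induction_on with
  | empty => simp
  | insert a s ha ih =>
    simp only [forall_mem_insert] at hx hy hxy
    rw [prod_insert ha, prod_insert ha, prod_insert ha, sum_insert ha]
    have ih' := ih hx.2 hy.2 hxy.2
    have hY₀ : 0 ≤ ∏ j ∈ s, y j := prod_nonneg fun j hj => (hy.2 j hj).1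
    have hYC : ∏ j ∈ s, y j ≤ ∏ j ∈ s, c j :=
      prod_le_prod (fun j hj => (hy.2 j hj).1) fun j hj => (hy.2 j hj).2
    have hc : 0 ≤ c a := hx.1.1.trans hx.1.2
    calc |x a * ∏ j ∈ s, x j - y a * ∏ j ∈ s, y j|
        = |x a * (∏ j ∈ s, x j - ∏ j ∈ s, y j) + (x a - y a) * ∏ j ∈ s, y j| := by
          congr 1; ring
      _ ≤ c a * ((∏ j ∈ s, c j) * ∑ j ∈ s, e j) + c a * e a * ∏ j ∈ s, c j := by
        refine (abs_add_le _ _).trans (add_le_add ?_ ?_)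
        · rw [abs_mul, abs_of_nonneg hx.1.1]
          exact mul_le_mul hx.1.2 ih' (abs_nonneg _) hc
        · rw [abs_mul, abs_of_nonneg hY₀]
          exact mul_le_mul hxy.1 hYC hY₀ ((abs_nonneg _).trans hxy.1)
      _ = (c a * ∏ j ∈ s, c j) * (e a + ∑ j ∈ s, e j) := by ring

theorem survival_products_close
    (r : ℕ) (p p' : ℕ → ℝ) (ε : ℝ) (hε : 0 ≤ ε)
    (hp : ∀ i ∈ Finset.Icc 1 r, p i ∈ Set.Icc (0 : ℝ) 1)
    (hp' : ∀ i ∈ Finset.Icc 1 r, p' i ∈ Set.Icc (0 : ℝ) 1)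
    (hclose : ∀ i ∈ Finset.Icc 1 r,
      p i ≤ (1 + ε) * p' i ∧ p' i ≤ (1 + ε) * p i ∧
      1 - p i ≤ (1 + ε) * (1 - p' i) ∧ 1 - p' i ≤ (1 + ε) * (1 - p i)) :
    ∀ i ∈ Finset.Icc 1 r,
      |(∏ j ∈ Finset.Icc 1 i, (1 - p' j)) - ∏ j ∈ Finset.Icc 1 i, (1 - p j)|
        ≤ 3 * ε * (∏ j ∈ Finset.Icc 1 i, (1 - min (p j) (p' j)))
            * (∑ j ∈ Finset.Icc 1 i, min (p j) (p' j)) := by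
  intro i hi
  have hsub : Icc 1 i ⊆ Icc 1 r := Icc_subset_Icc_right (mem_Icc.1 hi).2
  have hq : ∀ j ∈ Icc 1 i, 1 - p j ∈ Set.Icc 0 (1 - min (p j) (p' j)) := fun j hj =>
    ⟨sub_nonneg.2 (hp j (hsub hj)).2, sub_le_sub_left (min_le_left _ _) 1⟩
  have hq' : ∀ j ∈ Icc 1 i, 1 - p' j ∈ Set.Icc 0 (1 - min (p j) (p' j)) := fun j hj =>
    ⟨sub_nonneg.2 (hp' j (hsub hj)).2, sub_le_sub_left (min_le_right _ _) 1⟩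
  have hdiff : ∀ j ∈ Icc 1 i,
      |(1 - p' j) - (1 - p j)| ≤ (1 - min (p j) (p' j)) * (3 * ε * min (p j) (p' j)) := by
    intro j hj
    have hm := mul_nonneg (mul_nonneg hε (le_min (hp j (hsub hj)).1 (hp' j (hsub hj)).1))
      ((hq j hj).1.trans (hq j hj).2)
    rw [sub_sub_sub_cancel_left]
    refine (RatioClose.abs_sub_le hε (hp j (hsub hj)) (hp' j (hsub hj)) (hclose j (hsub hj))).trans ?_
    linarith
  calc _ ≤ (∏ j ∈ Icc 1 i, (1 - min (p j) (p' j))) * ∑ j ∈ Icc 1 i, 3 * ε * min (p j) (p' j) :=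
        abs_prod_sub_prod_le _ hq' hq hdiff
    _ = _ := by rw [← mul_sum]; ring
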